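/- Let F be a k-CNF over n variables with a tree-like Res(l) refutation with L leaves. Then F has a Resolution refutation of size at most (2n+1)^{l·⌈log₂ L⌉ + max{k,l}}; in particular, if l and l·⌈log₂ L⌉ + k are poly-logarithmic in n, the resulting Resolution refutation has quasi-polynomial size. -/

import Mathlib

/-- Propositional variables. -/
abbrev PVar := ℕ

/-- A literal: a variable together with a sign (`true` = the positive literal `x`,
`false` = the negated literal `¬x`). -/
abbrev PLit := PVar × Bool

/-- Negation of a literal. -/
def PLit.neg (m : PLit) : PLit := (m.1, !m.2)

/-- A clause: a finite set of literals, read as their disjunction.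
Its width is its cardinality. -/
abbrev PClause := Finset PLit

/-- A CNF formula: a finite set of clauses, read as their conjunction. -/
abbrev PCnf := Finset PClause

/-- A term: a finite set of literals, read as their conjunction. -/
abbrev PTerm := Finset PLit

/-- A DNF: a finite set of terms, read as their disjunction. -/
abbrev PDnf := Finset PTerm

/-- `D` is an `l`-DNF: every term of `D` has at most `l` literals. -/
def IsLDnf (l : ℕ) (D : PDnf) : Prop := ∀ T ∈ D, T.card ≤ l

/-- The negation `¬C` of a clause `C = m₁ ∨ … ∨ m_t`, i.e. the term `¬m₁ ∧ … ∧ ¬m_t`. -/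
def PClause.negTerm (C : PClause) : PTerm := C.image PLit.neg

/-- A clause viewed as a DNF consisting of singleton terms. -/
def PClause.toDnf (C : PClause) : PDnf := C.image (fun m => ({m} : PTerm))

/-- The disjunction `¬l₁ ∨ … ∨ ¬l_s` of the negations of the literals of the
term `T = l₁ ∧ … ∧ l_s`, as a DNF of singleton terms. -/
def PTerm.negLits (T : PTerm) : PDnf := T.image (fun m => ({m.neg} : PTerm))

/-- Binary proof trees whose nodes are labelled by DNFs. -/
inductive PTree : Type where
  | leaf (D : PDnf) : PTree
  | node (D : PDnf) (t₁ t₂ : PTree) : PTree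

namespace PTree

/-- The label at the root of the tree. -/
def concl : PTree → PDnf
  | .leaf D => D
  | .node D _ _ => D

/-- The number of leaves of the tree. -/
def leaves : PTree → ℕ
  | .leaf _ => 1
  | .node _ t₁ t₂ => t₁.leaves + t₂.leaves

/-- The total number of nodes (proof lines) of the tree. -/
def size : PTree → ℕ
  | .leaf _ => 1
  | .node _ t₁ t₂ => t₁.size + t₂.size + 1

/-- The list of all labels occurring in the tree. -/
def labels : PTree → List PDnf
  | .leaf D => [D]
  | .node D t₁ t₂ => D :: (t₁.labels ++ t₂.labels)

/-- Structural validity of a tree-like Res derivation from the set `H` of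
hypothesis DNFs: every leaf is a hypothesis or an axiom
`(l₁∧…∧l_s) ∨ ¬l₁ ∨ … ∨ ¬l_s` (with `s ≥ 1`), and every internal node with
children `A ∨ (l₁∧…∧l_s)` and `B ∨ ¬l₁ ∨ … ∨ ¬l_s` is labelled by the
cut `A ∨ B`. -/
def okStruct (H : Finset PDnf) : PTree → Prop
  | .leaf D => D ∈ H ∨ ∃ T : PTerm, T.Nonempty ∧ D = insert T T.negLits
  | .node D t₁ t₂ => t₁.okStruct H ∧ t₂.okStruct H ∧
      ∃ (T : PTerm) (A B : PDnf), T.Nonempty ∧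
        t₁.concl = insert T A ∧ t₂.concl = B ∪ T.negLits ∧ D = A ∪ B

/-- A valid tree-like Res(l) derivation from the hypotheses `H`: it is
structurally valid and every proof line is an `l`-DNF. -/
def valid (H : Finset PDnf) (l : ℕ) (t : PTree) : Prop :=
  t.okStruct H ∧ ∀ D ∈ t.labels, IsLDnf l D

/-- The number of leaves labelled by an axiom rather than by a hypothesis. -/
def axLeafCount (H : Finset PDnf) : PTree → ℕ
  | .leaf D => if D ∈ H then 0 else 1
  | .node _ t₁ t₂ => t₁.axLeafCount H + t₂.axLeafCount H

end PTree

/-- The set of hypothesis DNFs associated to a CNF: each clause read as a DNF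
of singleton terms. -/
def PCnf.toHyps (F : PCnf) : Finset PDnf := F.image PClause.toDnf

/-- `t` is a tree-like Res(l) refutation of the CNF `F`: a valid tree-like
Res(l) derivation from the clauses of `F` whose root is the empty DNF. -/
def TreeResRefutation (F : PCnf) (l : ℕ) (t : PTree) : Prop :=
  t.valid F.toHyps l ∧ t.concl = ∅

/-- Resolution inference: the clause `C` is obtained from two clauses
`A ∨ x` and `B ∨ ¬x` occurring in `prev` by the resolution rule, yielding `A ∨ B`. -/
def ResStep (prev : List PClause) (C : PClause) : Prop :=
  ∃ A ∈ prev, ∃ B ∈ prev, ∃ x : PVar,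
    (x, true) ∈ A ∧ (x, false) ∈ B ∧
    C = A.erase (x, true) ∪ B.erase (x, false)

/-- `π` is a resolution derivation from the CNF `F`: every clause of `π`
belongs to `F` or follows from two earlier clauses by the resolution rule. -/
def IsResDeriv (F : PCnf) (π : List PClause) : Prop :=
  ∀ i : Fin π.length, π.get i ∈ F ∨ ResStep (π.take i) (π.get i)

/-- `π` is a resolution derivation of the clause `C` from the CNF `F`
(its last clause is `C`); a refutation when `C = ∅`. Its size is `π.length`
and its width is the maximum cardinality of a clause in `π`. -/
def ResDerivOf (F : PCnf) (C : PClause) (π : List PClause) : Prop :=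
  IsResDeriv F π ∧ π.getLast? = some C

/-- A partial assignment: maps some variables to truth values. -/
abbrev PAssign := PVar → Option Bool

/-- The restriction `F|ρ`: delete every clause containing a literal satisfied
by `ρ`, and delete from the remaining clauses every literal falsified by `ρ`. -/
def PCnf.restrict (F : PCnf) (ρ : PAssign) : PCnf :=
  (F.filter (fun C => ∀ m ∈ C, ρ m.1 ≠ some m.2)).image
    (fun C => C.filter (fun m => ρ m.1 ≠ some (!m.2)))


/-!
The tree-like Res(l) refutation is first turned into a Resolution refutation of width
`w = l·⌈log₂ L⌉ + max k l`. Listing every derived clause once then gives the size bound, since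
over `n` variables there are at most `(2n+1)^w` clauses of width at most `w`.

The width bound is proved by induction on the tree, carrying a clause `P` (the negation of the
current restriction) such that `P ∨ ¬T` is derivable up to weakening for every term `T` of the
current line. At a cut on a term `T`, only the subtree with at most half of the leaves is entered
with a larger `P`: on the left, with one literal of `T` added, which derives the literals of `T`
relative to `P`; on the right, with `¬T` added, which refutes `T` relative to `P`. The other subtree
is entered with `P` itself, so `P` gains at most `l` literals each time the number of leaves halves.
At a leaf, the literals of the axiom or of the clause of `F` are resolved away against the
clauses obtained in this way.
-/

theorem PLit.neg_neg (m : PLit) : m.neg.neg = m := by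
  simp [PLit.neg]

theorem PLit.neg_ne (m : PLit) : m.neg ≠ m := by
  obtain ⟨x, b⟩ := m
  simp [PLit.neg]

namespace PClause

theorem mem_negTerm {C : PClause} {m : PLit} : m ∈ C.negTerm ↔ m.neg ∈ C := by
  refine ⟨fun h => ?_, fun h => Finset.mem_image.2 ⟨m.neg, h, PLit.neg_neg m⟩⟩
  obtain ⟨a, ha, rfl⟩ := Finset.mem_image.1 h
  rwa [PLit.neg_neg]

theorem card_negTerm_le (C : PClause) : C.negTerm.card ≤ C.card :=
  Finset.card_image_le

theorem union_negTerm_singleton (P : PClause) (m : PLit) :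
    P ∪ PClause.negTerm {m} = insert m.neg P := by
  rw [negTerm, Finset.image_singleton, Finset.union_singleton]

end PClause

inductive WidthDerivable (F : PCnf) (w : ℕ) : PClause → Prop
  | hyp {C : PClause} : C ∈ F → C.card ≤ w → WidthDerivable F w C
  | res {A B : PClause} {m : PLit} : WidthDerivable F w A → WidthDerivable F w B →
      m ∈ A → m.neg ∈ B → (A.erase m ∪ B.erase m.neg).card ≤ w →
      WidthDerivable F w (A.erase m ∪ B.erase m.neg)

namespace WidthDerivable

variable {F : PCnf} {w : ℕ} {C : PClause}

theorem card_le (h : WidthDerivable F w C) : C.card ≤ w := by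
  cases h <;> assumption

theorem var_lt {n : ℕ} (hvars : ∀ C ∈ F, ∀ m ∈ C, m.1 < n) (h : WidthDerivable F w C) :
    ∀ m ∈ C, m.1 < n := by
  induction h with
  | hyp hC _ => exact hvars _ hC
  | res _ _ _ _ _ ihA ihB =>
    intro m hm
    rcases Finset.mem_union.1 hm with h | h
    · exact ihA m (Finset.mem_of_mem_erase h)
    · exact ihB m (Finset.mem_of_mem_erase h)

end WidthDerivable

def WidthEntails (F : PCnf) (w : ℕ) (C : PClause) : Prop :=
  (∃ m ∈ C, m.neg ∈ C) ∨ ∃ E, WidthDerivable F w E ∧ E ⊆ C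

namespace WidthEntails

variable {F : PCnf} {w : ℕ} {P C D : PClause} {m : PLit}

theorem of_neg_mem (hm : m ∈ C) (hm' : m.neg ∈ C) : WidthEntails F w C :=
  .inl ⟨m, hm, hm'⟩

theorem mono (h : WidthEntails F w C) (hCD : C ⊆ D) : WidthEntails F w D := by
  rcases h with ⟨x, hx, hx'⟩ | ⟨E, hE, hEC⟩
  · exact of_neg_mem (hCD hx) (hCD hx')
  · exact .inr ⟨E, hE, hEC.trans hCD⟩

theorem of_insert (h : WidthEntails F w (insert m P)) (hm : m.neg ∉ P) :
    WidthEntails F w P ∨ ∃ X, WidthDerivable F w X ∧ m ∈ X ∧ X ⊆ insert m P := by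
  rcases h with ⟨x, hx, hx'⟩ | ⟨X, hX, hXP⟩
  · have hxm : x ≠ m := by
      rintro rfl
      rcases Finset.mem_insert.1 hx' with h | h
      exacts [PLit.neg_ne x h, hm h]
    have hxm' : x.neg ≠ m := by
      rintro rfl
      rw [PLit.neg_neg] at hm
      exact hm (Finset.mem_of_mem_insert_of_ne hx hxm)
    exact .inl (of_neg_mem (Finset.mem_of_mem_insert_of_ne hx hxm)
      (Finset.mem_of_mem_insert_of_ne hx' hxm'))
  · by_cases hmX : m ∈ X
    · exact .inr ⟨X, hX, hmX, hXP⟩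
    · exact .inl (.inr ⟨X, hX, (Finset.subset_insert_iff_of_notMem hmX).1 hXP⟩)

theorem cut (h₁ : WidthEntails F w (insert m P)) (h₂ : WidthEntails F w (insert m.neg P))
    (hw : P.card ≤ w) : WidthEntails F w P := by
  by_cases hm : m ∈ P
  · rwa [Finset.insert_eq_of_mem hm] at h₁
  by_cases hm' : m.neg ∈ P
  · rwa [Finset.insert_eq_of_mem hm'] at h₂
  rcases h₁.of_insert hm' with h | ⟨X, hX, hmX, hXP⟩
  · exact h
  rcases h₂.of_insert (by rwa [PLit.neg_neg]) with h | ⟨Y, hY, hmY, hYP⟩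
  · exact h
  have hsub : X.erase m ∪ Y.erase m.neg ⊆ P :=
    Finset.union_subset (Finset.subset_insert_iff.1 hXP) (Finset.subset_insert_iff.1 hYP)
  exact .inr ⟨_, .res hX hY hmX hmY ((Finset.card_le_card hsub).trans hw), hsub⟩

theorem of_union {S : PClause} (h : WidthEntails F w (P ∪ S))
    (hS : ∀ m ∈ S, WidthEntails F w (insert m.neg P)) (hw : P.card + S.card ≤ w) :
    WidthEntails F w P := by
  induction S using Finset.induction_on with
  | empty => simpa using h
  | insert m S hmS ih =>
    rw [Finset.card_insert_of_notMem hmS] at hw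
    refine ih ?_ (fun x hx => hS x (Finset.mem_insert_of_mem hx)) (by omega)
    refine cut (m := m) (by rwa [Finset.union_insert] at h)
      ((hS m (Finset.mem_insert_self m S)).mono
        (Finset.insert_subset_insert _ Finset.subset_union_left)) ?_
    exact (Finset.card_union_le P S).trans (by omega)

end WidthEntails

theorem Nat.clog_two_add_one_le {m n : ℕ} (hm : 1 ≤ m) (h : 2 * m ≤ n) :
    Nat.clog 2 m + 1 ≤ Nat.clog 2 n := by
  rw [Nat.clog_of_two_le (n := n) one_lt_two (by omega)]
  exact Nat.add_le_add_right (Nat.clog_mono_right 2 (by omega)) 1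

/-- Width-`w` entailment of `P ∨ ¬D`, term by term. -/
def WidthRefutes (F : PCnf) (w : ℕ) (P : PClause) (D : PDnf) : Prop :=
  ∀ T ∈ D, WidthEntails F w (P ∪ PClause.negTerm T)

namespace WidthRefutes

variable {F : PCnf} {w : ℕ} {P : PClause} {A B : PDnf} {T : PTerm}

theorem mono {P' : PClause} (h : WidthRefutes F w P A) (hP : P ⊆ P') :
    WidthRefutes F w P' A :=
  fun T' hT' => (h T' hT').mono (Finset.union_subset_union hP le_rfl)

theorem insert_of_mem {μ : PLit} (hA : WidthRefutes F w P A) (hμ : μ ∈ T) :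
    WidthRefutes F w (insert μ P) (insert T A) := by
  refine Finset.forall_mem_insert _ _ _ |>.2 ⟨?_, hA.mono (Finset.subset_insert μ P)⟩
  exact .of_neg_mem (m := μ) (by simp)
    (Finset.mem_union_right _ (PClause.mem_negTerm.2 (by rwa [PLit.neg_neg])))

theorem union_negLits (hB : WidthRefutes F w P B)
    (hT : ∀ μ ∈ T, WidthEntails F w (insert μ P)) :
    WidthRefutes F w P (B ∪ T.negLits) := by
  refine Finset.forall_mem_union.2 ⟨hB, fun T' hT' => ?_⟩
  obtain ⟨μ, hμ, rfl⟩ := Finset.mem_image.1 hT'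
  rw [PClause.union_negTerm_singleton, PLit.neg_neg]
  exact hT μ hμ

theorem negTerm_union_negLits (hB : WidthRefutes F w P B) :
    WidthRefutes F w (P ∪ PClause.negTerm T) (B ∪ T.negLits) := by
  refine (hB.mono Finset.subset_union_left).union_negLits fun μ hμ => ?_
  exact .of_neg_mem (m := μ.neg)
    (Finset.mem_insert_of_mem
      (Finset.mem_union_right _ (PClause.mem_negTerm.2 (by rwa [PLit.neg_neg]))))
    (by rw [PLit.neg_neg]; exact Finset.mem_insert_self _ _)

theorem widthEntails_of_hyp {C : PClause} (hP : WidthRefutes F w P C.toDnf) (hC : C ∈ F)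
    (hw : P.card + C.card ≤ w) : WidthEntails F w P := by
  refine WidthEntails.of_union (S := C)
    (.inr ⟨C, .hyp hC (by omega), Finset.subset_union_right⟩) (fun m hm => ?_) hw
  rw [← PClause.union_negTerm_singleton]
  exact hP _ (Finset.mem_image_of_mem _ hm)

theorem widthEntails_of_axiom (hP : WidthRefutes F w P (insert T T.negLits))
    (hw : P.card + T.card ≤ w) : WidthEntails F w P := by
  refine WidthEntails.of_union (hP T (Finset.mem_insert_self _ _)) (fun m hm => ?_)
    ((Nat.add_le_add_left (PClause.card_negTerm_le T) _).trans hw)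
  have hmT : {m} ∈ T.negLits :=
    Finset.mem_image.2 ⟨m.neg, PClause.mem_negTerm.1 hm, by rw [PLit.neg_neg]⟩
  rw [← PClause.union_negTerm_singleton]
  exact hP _ (Finset.mem_insert_of_mem hmT)

end WidthRefutes

namespace PTree

theorem concl_mem_labels (t : PTree) : t.concl ∈ t.labels := by
  cases t <;> simp [concl, labels]

theorem one_le_leaves (t : PTree) : 1 ≤ t.leaves := by
  induction t with
  | leaf => simp [leaves]
  | node _ _ _ ih₁ ih₂ => simp only [leaves]; omega

variable {F : PCnf} {k l w : ℕ}

theorem widthEntails_of_okStruct (hF : ∀ C ∈ F, C.card ≤ k) :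
    ∀ {t : PTree}, t.okStruct F.toHyps → (∀ D ∈ t.labels, IsLDnf l D) → ∀ {P : PClause},
      WidthRefutes F w P t.concl →
      P.card + l * Nat.clog 2 t.leaves + max k l ≤ w → WidthEntails F w P
  | .leaf _, .inl hhyp, _, P, hP, hw => by
    obtain ⟨C, hC, rfl⟩ := Finset.mem_image.1 hhyp
    exact hP.widthEntails_of_hyp hC (by have := hF C hC; omega)
  | .leaf _, .inr ⟨T, _, rfl⟩, hlab, P, hP, hw => by
    have hTl : T.card ≤ l := hlab _ (List.mem_singleton_self _) T (Finset.mem_insert_self _ _)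
    exact hP.widthEntails_of_axiom (by omega)
  | .node _ t₁ t₂, ⟨ok₁, ok₂, T, A, B, hT, hc₁, hc₂, rfl⟩, hlab, P, hP, hw => by
    simp only [concl, leaves] at hP hw
    have hlab₁ : ∀ D ∈ t₁.labels, IsLDnf l D := fun D hD => hlab D (by simp [labels, hD])
    have hlab₂ : ∀ D ∈ t₂.labels, IsLDnf l D := fun D hD => hlab D (by simp [labels, hD])
    have hTl : T.card ≤ l :=
      hlab₁ _ t₁.concl_mem_labels T (hc₁ ▸ Finset.mem_insert_self _ _)
    have hl : 1 ≤ l := (Finset.card_pos.2 hT).trans_le hTl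
    have hA : WidthRefutes F w P A := fun T' hT' => hP T' (Finset.mem_union_left _ hT')
    have hB : WidthRefutes F w P B := fun T' hT' => hP T' (Finset.mem_union_right _ hT')
    by_cases hsmall : 2 * t₁.leaves ≤ t₁.leaves + t₂.leaves
    · have hhalf := Nat.mul_le_mul_left l (Nat.clog_two_add_one_le t₁.one_le_leaves hsmall)
      rw [Nat.mul_add] at hhalf
      have hunit : ∀ μ ∈ T, WidthEntails F w (insert μ P) := fun μ hμ =>
        widthEntails_of_okStruct hF ok₁ hlab₁ (hc₁ ▸ hA.insert_of_mem hμ)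
          (by have := Finset.card_insert_le μ P; omega)
      refine widthEntails_of_okStruct hF ok₂ hlab₂ (hc₂ ▸ hB.union_negLits hunit) ?_
      have := Nat.mul_le_mul_left l
        (Nat.clog_mono_right 2 (Nat.le_add_left t₂.leaves t₁.leaves))
      omega
    · have hhalf := Nat.mul_le_mul_left l (Nat.clog_two_add_one_le t₂.one_le_leaves
        (by omega : 2 * t₂.leaves ≤ t₁.leaves + t₂.leaves))
      rw [Nat.mul_add] at hhalf
      have hrefute : WidthEntails F w (P ∪ PClause.negTerm T) :=
        widthEntails_of_okStruct hF ok₂ hlab₂ (hc₂ ▸ hB.negTerm_union_negLits) (by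
          have := Finset.card_union_le P (PClause.negTerm T)
          have := PClause.card_negTerm_le T
          omega)
      refine widthEntails_of_okStruct hF ok₁ hlab₁
        (hc₁ ▸ Finset.forall_mem_insert _ _ _ |>.2 ⟨hrefute, hA⟩) ?_
      have := Nat.mul_le_mul_left l
        (Nat.clog_mono_right 2 (Nat.le_add_right t₁.leaves t₂.leaves))
      omega

end PTree

theorem ResStep.of_mem {π : List PClause} {A B : PClause} {m : PLit}
    (hA : A ∈ π) (hB : B ∈ π) (hmA : m ∈ A) (hmB : m.neg ∈ B) :
    ResStep π (A.erase m ∪ B.erase m.neg) := by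
  obtain ⟨x, _ | _⟩ := m
  · exact ⟨B, hB, A, hA, x, hmB, hmA, Finset.union_comm _ _⟩
  · exact ⟨A, hA, B, hB, x, hmA, hmB, rfl⟩

namespace IsResDeriv

variable {F : PCnf} {π : List PClause}

theorem append_singleton {C : PClause} (h : IsResDeriv F π) (hC : C ∈ F ∨ ResStep π C) :
    IsResDeriv F (π ++ [C]) := by
  rintro ⟨i, hi⟩
  rw [List.length_append, List.length_singleton] at hi
  rcases Nat.lt_or_ge i π.length with hlt | hge
  · simpa [List.getElem_append_left hlt, List.take_append_of_le_length hlt.le] using h ⟨i, hlt⟩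
  · obtain rfl : i = π.length := by omega
    simpa using hC

theorem take (h : IsResDeriv F π) (j : ℕ) : IsResDeriv F (π.take j) := by
  rintro ⟨i, hi⟩
  rw [List.length_take] at hi
  simpa [List.take_take, Nat.min_eq_left (le_of_lt (lt_min_iff.1 hi).1)] using h ⟨i, by omega⟩

theorem exists_resDerivOf {C : PClause} (h : IsResDeriv F π) (hC : C ∈ π) :
    ∃ π', ResDerivOf F C π' ∧ π' <+: π := by
  obtain ⟨i, hi, rfl⟩ := List.getElem_of_mem hC
  refine ⟨π.take (i + 1), ⟨h.take _, ?_⟩, List.take_prefix _ _⟩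
  rw [List.getLast?_eq_getElem?]
  simp [hi]

end IsResDeriv

def IsNodupWidthDeriv (F : PCnf) (w : ℕ) (π : List PClause) : Prop :=
  IsResDeriv F π ∧ π.Nodup ∧ ∀ C ∈ π, WidthDerivable F w C

namespace IsNodupWidthDeriv

variable {F : PCnf} {w : ℕ} {π : List PClause} {C : PClause}

theorem nil : IsNodupWidthDeriv F w [] :=
  ⟨fun i => i.elim0, List.nodup_nil, by simp⟩

theorem extend (h : IsNodupWidthDeriv F w π) (hC : WidthDerivable F w C)
    (hstep : C ∈ F ∨ ResStep π C) :
    ∃ π', IsNodupWidthDeriv F w π' ∧ π ⊆ π' ∧ C ∈ π' := by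
  by_cases hCπ : C ∈ π
  · exact ⟨π, h, List.Subset.refl π, hCπ⟩
  refine ⟨π ++ [C], ⟨h.1.append_singleton hstep, ?_, ?_⟩,
    List.subset_append_left _ _, by simp⟩
  · refine List.nodup_append.2 ⟨h.2.1, List.nodup_singleton C, ?_⟩
    rintro a ha b hb rfl
    exact hCπ (List.mem_singleton.1 hb ▸ ha)
  · simpa [or_imp, forall_and] using ⟨h.2.2, hC⟩

end IsNodupWidthDeriv

theorem WidthDerivable.exists_nodupWidthDeriv {F : PCnf} {w : ℕ} {C : PClause}
    (hC : WidthDerivable F w C) {π : List PClause} (hπ : IsNodupWidthDeriv F w π) :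
    ∃ π', IsNodupWidthDeriv F w π' ∧ π ⊆ π' ∧ C ∈ π' := by
  induction hC generalizing π with
  | hyp hCF hw => exact hπ.extend (.hyp hCF hw) (.inl hCF)
  | res hA hB hmA hmB hw ihA ihB =>
    obtain ⟨π₁, h₁, hsub₁, hA₁⟩ := ihA hπ
    obtain ⟨π₂, h₂, hsub₂, hB₂⟩ := ihB h₁
    obtain ⟨π₃, h₃, hsub₃, hC₃⟩ :=
      h₂.extend (.res hA hB hmA hmB hw) (.inr (ResStep.of_mem (hsub₂ hA₁) hB₂ hmA hmB))
    exact ⟨π₃, h₃, List.Subset.trans (List.Subset.trans hsub₁ hsub₂) hsub₃, hC₃⟩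

theorem sum_range_choose_le_add_one_pow (a w : ℕ) :
    ∑ i ∈ Finset.range (w + 1), a.choose i ≤ (a + 1) ^ w := by
  rw [add_pow]
  refine Finset.sum_le_sum fun i hi => ?_
  rw [one_pow, mul_one]
  exact (Nat.choose_le_pow a i).trans
    (Nat.le_mul_of_pos_right _ (Nat.choose_pos (Nat.lt_succ_iff.1 (Finset.mem_range.1 hi))))

theorem card_le_of_forall_width_le {n w : ℕ} (S : Finset PClause)
    (hS : ∀ C ∈ S, C.card ≤ w ∧ ∀ m ∈ C, m.1 < n) : S.card ≤ (2 * n + 1) ^ w := by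
  set U : Finset PLit := Finset.range n ×ˢ Finset.univ
  have hU : U.card = 2 * n := by simp [U, mul_comm]
  have hsub : S ⊆ (Finset.range (w + 1)).biUnion (U.powersetCard ·) := by
    intro C hC
    refine Finset.mem_biUnion.2 ⟨C.card, Finset.mem_range.2 (Nat.lt_succ_of_le (hS C hC).1),
      Finset.mem_powersetCard.2 ⟨fun m hm => ?_, rfl⟩⟩
    simpa [U] using (hS C hC).2 m hm
  calc S.card ≤ ∑ i ∈ Finset.range (w + 1), (U.powersetCard i).card :=
        (Finset.card_le_card hsub).trans Finset.card_biUnion_le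
    _ = ∑ i ∈ Finset.range (w + 1), (2 * n).choose i := by simp [Finset.card_powersetCard, hU]
    _ ≤ (2 * n + 1) ^ w := sum_range_choose_le_add_one_pow _ _

/-- If a `k`-CNF `F` over `n` variables has a tree-like Res(l) refutation
with `L` leaves, then `F` has a resolution refutation of size at most
`(2n+1)^(l·⌈log₂ L⌉ + max k l)`. -/
theorem small_res_of_tree_res
    (n k l L : ℕ) (F : PCnf)
    (hF : ∀ C ∈ F, C.card ≤ k) (hvars : ∀ C ∈ F, ∀ m ∈ C, m.1 < n)
    (t : PTree) (ht : TreeResRefutation F l t) (hL : t.leaves = L) :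
    ∃ π : List PClause, ResDerivOf F ∅ π ∧
      π.length ≤ (2 * n + 1) ^ (l * Nat.clog 2 L + max k l) := by
  obtain ⟨⟨hok, hlab⟩, hroot⟩ := ht
  set w := l * Nat.clog 2 L + max k l
  have hempty : WidthEntails F w ∅ :=
    PTree.widthEntails_of_okStruct hF hok hlab (by simp [WidthRefutes, hroot]) (by simp [hL, w])
  obtain ⟨E, hE, hEempty⟩ := hempty.resolve_left (by simp)
  rw [Finset.subset_empty.1 hEempty] at hE
  obtain ⟨π, ⟨hπ, hnodup, hwidth⟩, -, hmem⟩ := hE.exists_nodupWidthDeriv .nil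
  obtain ⟨π', hπ', hpre⟩ := hπ.exists_resDerivOf hmem
  refine ⟨π', hπ', ?_⟩
  rw [← List.toFinset_card_of_nodup (hnodup.sublist hpre.sublist)]
  refine card_le_of_forall_width_le _ fun C hC => ?_
  have hCw := hwidth C (hpre.subset (List.mem_toFinset.1 hC))
  exact ⟨hCw.card_le, hCw.var_lt hvars⟩
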